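/- Let α ∈ ℝ, β ∈ ℝ with β ≠ 0, and let u : ℝ → ℂ and v : ℝ → ℂ be differentiable with |u(t)| < |β| for all t; set Ω(t) = √(β² − |u(t)|²) > 0. Define for t ∈ ℝ and λ ∈ ℂ the matrices M(t,λ) = [[4λ² + 4iλΩ(t) − (α²+β²), 4iλu(t)],[4iλu(t)*, 4λ² − 4iλΩ(t) − (α²+β²)]] and V(t,λ) = −2iλ²σ₃ + [[i|u(t)|², 2λu(t) + i v(t)],[−2λu(t)* + i v(t)*, −i|u(t)|²]]. Then the boundary constraint d/dt M(t,λ) = V(t,−λ)·M(t,λ) − M(t,λ)·V(t,λ) holds for all t ∈ ℝ and all λ ∈ ℂ if and only if for all t ∈ ℝ, v(t) = i u'(t)/(2Ω(t)) − u(t)Ω(t)/2 + u(t)|u(t)|²/(2Ω(t)) − u(t)α²/(2Ω(t)). -/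

import Mathlib

open Complex Matrix

/-- σ₃ = [[1,0],[0,−1]]. -/
def sigma3 : Matrix (Fin 2) (Fin 2) ℂ := !![1, 0; 0, -1]

/-- The unscaled boundary matrix
`M(t,λ) = [[4λ²+4iλΩ(t)−(α²+β²), 4iλu(t)],[4iλu(t)*, 4λ²−4iλΩ(t)−(α²+β²)]]`. -/
noncomputable def bMat (α β : ℝ) (u : ℝ → ℂ) (Ω : ℝ → ℝ) (t : ℝ) (lam : ℂ) :
    Matrix (Fin 2) (Fin 2) ℂ :=
  !![4 * lam ^ 2 + 4 * I * lam * (Ω t : ℂ) - ((α : ℂ) ^ 2 + (β : ℂ) ^ 2),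
      4 * I * lam * u t;
      4 * I * lam * (starRingEnd ℂ (u t)),
      4 * lam ^ 2 - 4 * I * lam * (Ω t : ℂ) - ((α : ℂ) ^ 2 + (β : ℂ) ^ 2)]

/-- The t-part `V(t,λ)` of the NLS Lax pair at `x = 0`, with boundary traces
`u(t) = u(t,0)` and `v(t) = u_x(t,0)`. -/
noncomputable def laxVt (u v : ℝ → ℂ) (t : ℝ) (lam : ℂ) : Matrix (Fin 2) (Fin 2) ℂ :=
  (-2 * I * lam ^ 2) • sigma3 +
    !![I * ((‖u t‖ : ℂ) ^ 2), 2 * lam * u t + I * v t;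
        -2 * lam * (starRingEnd ℂ (u t)) + I * (starRingEnd ℂ (v t)),
        -(I * ((‖u t‖ : ℂ) ^ 2))]

/-!
Both sides of the boundary constraint are `λ` times a `λ`-independent matrix: `∂ₜM = 4iλ • R`
and `V(−λ)M − MV(λ) = 4λ • B`, so the constraint for all `λ` is the single identity `i • R = B`.
Its off-diagonal entries are the boundary condition, after clearing `2Ω` and using
`Ω² = β² − |u|²`. Its diagonal entries involve `Ω' = −Re(ū u')/Ω` and follow from the boundary
condition and its complex conjugate, because `2Ω v − i u'` is a real multiple of `u`.
-/

open ComplexConjugate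

/-- `∂ₜM(t,λ) = 4iλ • bMatRate (u' t) (Ω' t)`. -/
noncomputable def bMatRate (z' : ℂ) (w : ℝ) : Matrix (Fin 2) (Fin 2) ℂ :=
  !![(w : ℂ), z'; conj z', -(w : ℂ)]

/-- `V(t,−λ)M(t,λ) − M(t,λ)V(t,λ) = 4λ • laxBracket α β (Ω t) (u t) (v t)`. -/
noncomputable def laxBracket (α β W : ℝ) (z v : ℂ) : Matrix (Fin 2) (Fin 2) ℂ :=
  !![z * conj v - v * conj z, 2 * W * v - 2 * ‖z‖ ^ 2 * z + (α ^ 2 + β ^ 2) * z;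
    -(2 * W * conj v - 2 * ‖z‖ ^ 2 * conj z + (α ^ 2 + β ^ 2) * conj z),
    v * conj z - z * conj v]

theorem laxVt_neg_mul_bMat_sub_bMat_mul_laxVt (α β : ℝ) (u v : ℝ → ℂ) (Ω : ℝ → ℝ) (t : ℝ)
    (lam : ℂ) :
    laxVt u v t (-lam) * bMat α β u Ω t lam - bMat α β u Ω t lam * laxVt u v t lam =
      (4 * lam) • laxBracket α β (Ω t) (u t) (v t) := by
  ext i j
  fin_cases i <;> fin_cases j <;>
    simp [laxVt, bMat, sigma3, laxBracket] <;> ring_nf <;> simp only [I_sq] <;> ring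

theorem hasDerivAt_bMat_apply (α β : ℝ) {u : ℝ → ℂ} {Ω : ℝ → ℝ} {t : ℝ} {z' : ℂ} {w : ℝ}
    (hu : HasDerivAt u z' t) (hΩ : HasDerivAt Ω w t) (lam : ℂ) (i j : Fin 2) :
    HasDerivAt (fun s => bMat α β u Ω s lam i j) ((4 * I * lam) • bMatRate z' w i j) t := by
  have hΩc := hΩ.ofReal_comp.const_mul (4 * I * lam)
  fin_cases i <;> fin_cases j <;> simp only [bMat, bMatRate]
  · simpa using (hΩc.const_add (4 * lam ^ 2)).sub_const ((α : ℂ) ^ 2 + (β : ℂ) ^ 2)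
  · simpa using hu.const_mul (4 * I * lam)
  · simpa using hu.star.const_mul (4 * I * lam)
  · simpa using (hΩc.const_sub (4 * lam ^ 2)).sub_const ((α : ℂ) ^ 2 + (β : ℂ) ^ 2)

theorem hasDerivAt_sqrt_sq_sub_norm_sq {F : Type*} [NormedAddCommGroup F] [InnerProductSpace ℝ F]
    {u : ℝ → F} {u' : F} {t : ℝ} (β : ℝ) (hu : HasDerivAt u u' t)
    (h : β ^ 2 - ‖u t‖ ^ 2 ≠ 0) :
    HasDerivAt (fun s => √(β ^ 2 - ‖u s‖ ^ 2))
      (-inner ℝ (u t) u' / √(β ^ 2 - ‖u t‖ ^ 2)) t := by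
  convert (hu.norm_sq.const_sub (β ^ 2)).sqrt h using 1
  ring

theorem I_smul_bMatRate_eq_laxBracket_iff {α β W : ℝ} {z z' v : ℂ} (hW : W ≠ 0) :
    I • bMatRate z' (-inner ℝ z z' / W) = laxBracket α β W z v ↔
      I * z' = 2 * W * v - 2 * ‖z‖ ^ 2 * z + (α ^ 2 + β ^ 2) * z := by
  constructor
  · intro h
    simpa [bMatRate, laxBracket] using congrFun (congrFun h 0) 1
  · intro h
    have hc := congrArg conj h
    simp only [map_mul, map_sub, map_add, map_pow, map_ofNat, conj_I, conj_ofReal] at hc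
    have hW' : (W : ℂ) ≠ 0 := by exact_mod_cast hW
    have hw : ((-inner ℝ z z' / W : ℝ) : ℂ) = -(z' * conj z + conj z' * z) / (2 * W) := by
      rw [Complex.inner, ofReal_div, ofReal_neg, Complex.re_eq_add_conj]
      simp only [map_mul, conj_conj]
      ring
    rw [bMatRate, hw]
    ext i j
    fin_cases i <;> fin_cases j <;>
      simp only [laxBracket, Matrix.smul_apply, of_apply, cons_val', cons_val_zero, cons_val_one,
        cons_val_fin_one, smul_eq_mul, Fin.zero_eta, Fin.mk_one, Fin.isValue]
    · field_simp
      linear_combination z * hc - conj z * h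
    · exact h
    · linear_combination -hc
    · field_simp
      linear_combination conj z * h - z * hc

theorem eq_boundary_formula_iff {α β W : ℝ} {z z' v : ℂ} (hW : W ≠ 0)
    (hW2 : W ^ 2 = β ^ 2 - ‖z‖ ^ 2) :
    v = I * z' / (2 * W) - z * W / 2 + z * ‖z‖ ^ 2 / (2 * W) - z * α ^ 2 / (2 * W) ↔
      I * z' = 2 * W * v - 2 * ‖z‖ ^ 2 * z + (α ^ 2 + β ^ 2) * z := by
  have hW' : (W : ℂ) ≠ 0 := by exact_mod_cast hW
  have hW2' : (W : ℂ) ^ 2 = β ^ 2 - ‖z‖ ^ 2 := by exact_mod_cast hW2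
  have h2W : (2 * W : ℂ) ≠ 0 := mul_ne_zero two_ne_zero hW'
  rw [show I * z' / (2 * W) - z * W / 2 + z * ‖z‖ ^ 2 / (2 * W) - z * α ^ 2 / (2 * W) =
      (I * z' - z * W ^ 2 + z * ‖z‖ ^ 2 - z * α ^ 2) / (2 * W) by field_simp,
    eq_div_iff h2W, hW2']
  constructor <;> intro h <;> linear_combination -h

theorem new_boundary_constraint_general (α β : ℝ) (u v : ℝ → ℂ)
    (hu : Differentiable ℝ u)
    (hsmall : ∀ t : ℝ, ‖u t‖ < |β|)
    (Ω : ℝ → ℝ) (hΩ : ∀ t : ℝ, Ω t = Real.sqrt (β ^ 2 - ‖u t‖ ^ 2)) :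
    (∀ (t : ℝ) (lam : ℂ) (i j : Fin 2),
      HasDerivAt (fun s => bMat α β u Ω s lam i j)
        ((laxVt u v t (-lam) * bMat α β u Ω t lam
          - bMat α β u Ω t lam * laxVt u v t lam) i j) t) ↔
    (∀ t : ℝ,
      v t = I * deriv u t / (2 * (Ω t : ℂ))
        - u t * (Ω t : ℂ) / 2
        + u t * (‖u t‖ : ℂ) ^ 2 / (2 * (Ω t : ℂ))
        - u t * (α : ℂ) ^ 2 / (2 * (Ω t : ℂ))) := by
  simp_rw [laxVt_neg_mul_bMat_sub_bMat_mul_laxVt]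
  refine forall_congr' fun t => ?_
  have hpos : 0 < β ^ 2 - ‖u t‖ ^ 2 := sub_pos.2 (sq_lt_sq.2 (by rw [abs_norm]; exact hsmall t))
  have hW : Ω t ≠ 0 := by rw [hΩ t]; exact (Real.sqrt_pos.2 hpos).ne'
  have hW2 : Ω t ^ 2 = β ^ 2 - ‖u t‖ ^ 2 := by rw [hΩ t]; exact Real.sq_sqrt hpos.le
  have hΩ' : HasDerivAt Ω (-inner ℝ (u t) (deriv u t) / Ω t) t := by
    rw [funext hΩ]
    exact hasDerivAt_sqrt_sq_sub_norm_sq β (hu t).hasDerivAt hpos.ne'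
  have hM : ∀ lam i j, HasDerivAt (fun s => bMat α β u Ω s lam i j)
      (((4 * lam) • I • bMatRate (deriv u t) (-inner ℝ (u t) (deriv u t) / Ω t)) i j) t := by
    intro lam i j
    rw [← mul_smul, ← mul_right_comm]
    exact hasDerivAt_bMat_apply α β (hu t).hasDerivAt hΩ' lam i j
  rw [eq_boundary_formula_iff hW hW2, ← I_smul_bMatRate_eq_laxBracket_iff hW]
  constructor
  · intro H
    ext i j
    simpa using ((H 1 i j).unique (hM 1 i j)).symm
  · intro h lam i j
    rw [← h]
    exact hM lam i j

/-- The boundary constraint `d/dt M(t,λ) = V(t,−λ)M(t,λ) − M(t,λ)V(t,λ)` for all `t` and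
`λ` is equivalent to the new integrable boundary condition
`v = i u'/(2Ω) − uΩ/2 + u|u|²/(2Ω) − uα²/(2Ω)` with `Ω = √(β²−|u|²)`. -/
theorem new_boundary_constraint (α β : ℝ) (hβ : β ≠ 0) (u v : ℝ → ℂ)
    (hu : Differentiable ℝ u) (hv : Differentiable ℝ v)
    (hsmall : ∀ t : ℝ, ‖u t‖ < |β|)
    (Ω : ℝ → ℝ) (hΩ : ∀ t : ℝ, Ω t = Real.sqrt (β ^ 2 - ‖u t‖ ^ 2)) :
    (∀ (t : ℝ) (lam : ℂ) (i j : Fin 2),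
      HasDerivAt (fun s => bMat α β u Ω s lam i j)
        ((laxVt u v t (-lam) * bMat α β u Ω t lam
          - bMat α β u Ω t lam * laxVt u v t lam) i j) t) ↔
    (∀ t : ℝ,
      v t = I * deriv u t / (2 * (Ω t : ℂ))
        - u t * (Ω t : ℂ) / 2
        + u t * (‖u t‖ : ℂ) ^ 2 / (2 * (Ω t : ℂ))
        - u t * (α : ℂ) ^ 2 / (2 * (Ω t : ℂ))) :=
  new_boundary_constraint_general α β u v hu hsmall Ω hΩ
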